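/- For every G_δ subset R of 2^ω and every family 𝒲 of fewer than 𝔟 many compact subsets of R, there exists a σ-compact subset K of R containing ∪𝒲. -/

import Mathlib

/-!
Write `R = ⋂ₙ Uₙ` with `Uₙ` open. A compact `C ⊆ R` admits a modulus `f : ℕ → ℕ`: the
`f n`-cylinder around every point of `C` lies in `Uₙ`. Fewer than `𝔟` moduli are eventually
dominated by a single `g`, so each of them is dominated everywhere by `max g k` for some constant
`k`. The points whose `(max g k) n`-cylinders lie in `Uₙ` for all `n` form a closed, hence compact,
subset of `R`, and the union of these countably many compact sets contains every `C`.
-/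

open Set Filter PiNat

/-- The bounding number `𝔟`. -/
noncomputable def bCardinal : Cardinal :=
  sInf { c : Cardinal |
    ∃ F : Set (ℕ → ℕ), Cardinal.mk F = c ∧
      ∀ g : ℕ → ℕ, ∃ f ∈ F, ¬ ∀ᶠ n in Filter.atTop, f n ≤ g n }

theorem exists_forall_eventually_le_of_mk_lt_bCardinal {ι : Type} (f : ι → ℕ → ℕ)
    (hι : Cardinal.mk ι < bCardinal) : ∃ g : ℕ → ℕ, ∀ i, ∀ᶠ n in atTop, f i n ≤ g n := by
  by_contra hbounded
  simp only [not_exists, not_forall] at hbounded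
  have hb : bCardinal ≤ Cardinal.mk (range f) :=
    csInf_le' ⟨range f, rfl, fun g ↦ (hbounded g).elim fun i hi ↦ ⟨f i, mem_range_self i, hi⟩⟩
  exact (hb.trans Cardinal.mk_range_le).not_gt hι

theorem exists_le_max_const_of_eventually_le {f g : ℕ → ℕ} (h : ∀ᶠ n in atTop, f n ≤ g n) :
    ∃ k, ∀ n, f n ≤ max (g n) k := by
  obtain ⟨N, hN⟩ := eventually_atTop.mp h
  refine ⟨(Finset.range N).sup f, fun n ↦ ?_⟩
  rcases lt_or_ge n N with hn | hn
  · exact le_max_of_le_right (Finset.le_sup (Finset.mem_range.mpr hn))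
  · exact le_max_of_le_left (hN n hn)

namespace PiNat

variable {E : ℕ → Type*}

def cylinderCore (U : ℕ → Set (∀ n, E n)) (h : ℕ → ℕ) : Set (∀ n, E n) :=
  {x | ∀ n, cylinder x (h n) ⊆ U n}

theorem cylinderCore_subset_iInter (U : ℕ → Set (∀ n, E n)) (h : ℕ → ℕ) :
    cylinderCore U h ⊆ ⋂ n, U n :=
  fun x hx ↦ mem_iInter.mpr fun n ↦ hx n (self_mem_cylinder x (h n))

theorem cylinderCore_mono (U : ℕ → Set (∀ n, E n)) {h h' : ℕ → ℕ} (hh' : h ≤ h') :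
    cylinderCore U h ⊆ cylinderCore U h' :=
  fun x hx n ↦ (cylinder_anti x (hh' n)).trans (hx n)

variable [∀ n, TopologicalSpace (E n)] [∀ n, DiscreteTopology (E n)]

theorem isLocallyConstant_cylinder (m : ℕ) :
    IsLocallyConstant fun x : ∀ n, E n ↦ cylinder x m :=
  (IsLocallyConstant.iff_exists_open _).mpr fun x ↦
    ⟨cylinder x m, isOpen_cylinder E x m, self_mem_cylinder x m, fun _ ↦ mem_cylinder_iff_eq.mp⟩

theorem isClopen_setOf_cylinder_subset (U : Set (∀ n, E n)) (m : ℕ) :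
    IsClopen {x | cylinder x m ⊆ U} :=
  ⟨⟨isLocallyConstant_cylinder m {V | V ⊆ U}ᶜ⟩, isLocallyConstant_cylinder m {V | V ⊆ U}⟩

theorem exists_cylinder_subset_of_isOpen {U : Set (∀ n, E n)} (hU : IsOpen U) {x : ∀ n, E n}
    (hx : x ∈ U) : ∃ m, cylinder x m ⊆ U := by
  obtain ⟨_, ⟨y, m, rfl⟩, hxy, hyU⟩ :=
    (isTopologicalBasis_cylinders E).exists_subset_of_mem_open hx hU
  exact ⟨m, mem_cylinder_iff_eq.mp hxy ▸ hyU⟩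

theorem _root_.IsCompact.exists_forall_cylinder_subset {K U : Set (∀ n, E n)}
    (hK : IsCompact K) (hU : IsOpen U) (hKU : K ⊆ U) : ∃ m, ∀ x ∈ K, cylinder x m ⊆ U :=
  hK.elim_directed_cover (fun m ↦ {x | cylinder x m ⊆ U})
    (fun m ↦ (isClopen_setOf_cylinder_subset U m).isOpen)
    (fun _ hx ↦ mem_iUnion.mpr (exists_cylinder_subset_of_isOpen hU (hKU hx)))
    (Monotone.directed_le fun _ _ hmn _ hx ↦ (cylinder_anti _ hmn).trans hx)

theorem isClosed_cylinderCore (U : ℕ → Set (∀ n, E n)) (h : ℕ → ℕ) :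
    IsClosed (cylinderCore U h) := by
  simpa only [cylinderCore, ofPred_forall] using
    isClosed_iInter fun n ↦ (isClopen_setOf_cylinder_subset (U n) (h n)).isClosed

theorem _root_.IsCompact.exists_subset_cylinderCore {K : Set (∀ n, E n)} (hK : IsCompact K)
    {U : ℕ → Set (∀ n, E n)} (hU : ∀ n, IsOpen (U n)) (hKU : K ⊆ ⋂ n, U n) :
    ∃ h : ℕ → ℕ, K ⊆ cylinderCore U h := by
  choose h hh using fun n ↦ hK.exists_forall_cylinder_subset (hU n) (hKU.trans (iInter_subset U n))
  exact ⟨h, fun x hx n ↦ hh n x hx⟩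

end PiNat

theorem sigmaCompact_absorbs_small_families_of_compacts
    (R : Set (ℕ → Bool)) (hR : IsGδ R)
    (W : Set (Set (ℕ → Bool))) (hWsmall : Cardinal.mk W < bCardinal)
    (hWcomp : ∀ K ∈ W, IsCompact K ∧ K ⊆ R) :
    ∃ K : Set (ℕ → Bool), IsSigmaCompact K ∧ K ⊆ R ∧ ⋃₀ W ⊆ K := by
  obtain ⟨U, hU, rfl⟩ := hR.eq_iInter_nat
  choose f hf using fun C : W ↦ (hWcomp C C.2).1.exists_subset_cylinderCore hU (hWcomp C C.2).2
  obtain ⟨g, hg⟩ := exists_forall_eventually_le_of_mk_lt_bCardinal f hWsmall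
  refine ⟨⋃ k, cylinderCore U fun n ↦ max (g n) k,
    isSigmaCompact_iUnion_of_isCompact _ fun k ↦ (isClosed_cylinderCore U _).isCompact,
    iUnion_subset fun k ↦ cylinderCore_subset_iInter U _, ?_⟩
  rintro x ⟨C, hC, hx⟩
  obtain ⟨k, hk⟩ := exists_le_max_const_of_eventually_le (hg ⟨C, hC⟩)
  exact mem_iUnion.mpr ⟨k, cylinderCore_mono U hk (hf ⟨C, hC⟩ hx)⟩
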